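/- arXiv:0804.1054 — 5 statements merged into one kernel-verified Lean document; each statement's English description precedes it below -/
import Mathlib

section
/- Let D be a triangulated category, (U, V[1]) a t-structure on D with inclusion u : U → D admitting right adjoint τ_U, and D' a strictly full triangulated subcategory of D. Then (D' ∩ U, D' ∩ V[1]) is a t-structure on D' if and only if (u ∘ τ_U)(D') ⊆ D'. -/
/-!
Every axiom of a t-structure except the truncation triangles passes from `(U, V)` to
`(D' ∩ U, D' ∩ V)`, since `D'` is closed under shifts. For `M ∈ D'` the ambient truncation
triangle `τ_U M → M → τ^V M → (τ_U M)[1]` lies in `D'` exactly when `τ_U M ∈ D'`: then also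
`τ^V M ∈ D'`, because a triangulated subcategory containing two vertices of a distinguished
triangle contains the third.
-/

open CategoryTheory Limits Pretriangulated

universe v u

variable {C : Type u} [Category.{v} C] [Preadditive C] [Limits.HasZeroObject C]
  [HasShift C ℤ] [∀ n : ℤ, (shiftFunctor C n).Additive] [Pretriangulated C]

/-- A t-structure on the (strictly full triangulated) subcategory `D'` of `C`, given by a pair
of classes of objects `(U, V)`: `U` and `V` are contained in `D'`, closed under isomorphisms
(within `D'`), `U[1] ⊆ U`, `V[-1] ⊆ V`, `Hom(U, V) = 0`, and every object `M` of `D'` fits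
into a distinguished triangle `U_M → M → V_M → U_M[1]` with `U_M ∈ U` and `V_M ∈ V`. -/
structure IsTStructureOn (D' U V : Set C) : Prop where
  subU : U ⊆ D'
  subV : V ⊆ D'
  isoU : ∀ ⦃X Y : C⦄, (X ≅ Y) → X ∈ U → Y ∈ D' → Y ∈ U
  isoV : ∀ ⦃X Y : C⦄, (X ≅ Y) → X ∈ V → Y ∈ D' → Y ∈ V
  shiftU : ∀ X ∈ U, X⟦(1 : ℤ)⟧ ∈ U
  shiftV : ∀ X ∈ V, X⟦(-1 : ℤ)⟧ ∈ V
  hom_zero : ∀ ⦃X Y : C⦄, X ∈ U → Y ∈ V → ∀ f : X ⟶ Y, f = 0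
  exists_triangle : ∀ M ∈ D', ∃ (X Y : C) (_ : X ∈ U) (_ : Y ∈ V)
    (f : X ⟶ M) (g : M ⟶ Y) (h : Y ⟶ X⟦(1 : ℤ)⟧), Triangle.mk f g h ∈ distTriang C

/-- A strictly full triangulated subcategory, given as a class of objects: closed under
isomorphisms, all shifts, and extensions (cones). -/
structure IsTriangulatedSub (D' : Set C) : Prop where
  iso_mem : ∀ ⦃X Y : C⦄, (X ≅ Y) → X ∈ D' → Y ∈ D'
  zero_mem : ∃ Z ∈ D', IsZero Z
  shift_mem : ∀ X ∈ D', ∀ n : ℤ, X⟦n⟧ ∈ D'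
  ext_mem : ∀ T ∈ distTriang C, T.obj₁ ∈ D' → T.obj₃ ∈ D' → T.obj₂ ∈ D'

theorem IsTriangulatedSub.obj₃_mem {D' : Set C} (hD' : IsTriangulatedSub D')
    {T : Triangle C} (hT : T ∈ distTriang C) (h₁ : T.obj₁ ∈ D') (h₂ : T.obj₂ ∈ D') :
    T.obj₃ ∈ D' :=
  hD'.ext_mem _ (rot_of_distTriang _ hT) h₂ (hD'.shift_mem _ h₁ 1)

theorem IsTStructureOn.inter_of_exists_triangle {D' U V : Set C} (hD' : IsTriangulatedSub D')
    (hUV : IsTStructureOn Set.univ U V)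
    (hτ : ∀ M ∈ D', ∃ (X Y : C) (_ : X ∈ U) (_ : Y ∈ V)
        (f : X ⟶ M) (g : M ⟶ Y) (h : Y ⟶ X⟦(1 : ℤ)⟧),
          Triangle.mk f g h ∈ (distTriang C) ∧ X ∈ D') :
    IsTStructureOn D' (D' ∩ U) (D' ∩ V) where
  subU := Set.inter_subset_left
  subV := Set.inter_subset_left
  isoU _ _ e hX hY := ⟨hY, hUV.isoU e hX.2 (Set.mem_univ _)⟩
  isoV _ _ e hX hY := ⟨hY, hUV.isoV e hX.2 (Set.mem_univ _)⟩
  shiftU X hX := ⟨hD'.shift_mem X hX.1 1, hUV.shiftU X hX.2⟩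
  shiftV X hX := ⟨hD'.shift_mem X hX.1 (-1), hUV.shiftV X hX.2⟩
  hom_zero _ _ hX hY f := hUV.hom_zero hX.2 hY.2 f
  exists_triangle M hM := by
    obtain ⟨X, Y, hX, hY, f, g, δ, hT, hXD'⟩ := hτ M hM
    exact ⟨X, Y, ⟨hXD', hX⟩, ⟨hD'.obj₃_mem hT hXD' hM, hY⟩, f, g, δ, hT⟩

/-- **Restriction of t-structures (Beilinson–Bernstein–Deligne).**
Let `(U, V)` be a t-structure on the triangulated category `C` and `D'` a strictly full
triangulated subcategory. Then `(D' ∩ U, D' ∩ V)` is a t-structure on `D'` if and only if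
`(u ∘ τ_U)(D') ⊆ D'`, i.e. for every `M ∈ D'` the first vertex of the truncation triangle
`τ_U M → M → τ^V M → (τ_U M)[1]` belongs to `D'`. -/
theorem stmt0 (D' U V : Set C) (hD' : IsTriangulatedSub D')
    (hUV : IsTStructureOn Set.univ U V) :
    IsTStructureOn D' (D' ∩ U) (D' ∩ V) ↔
      (∀ M ∈ D', ∃ (X Y : C) (_ : X ∈ U) (_ : Y ∈ V)
        (f : X ⟶ M) (g : M ⟶ Y) (h : Y ⟶ X⟦(1 : ℤ)⟧),
          Triangle.mk f g h ∈ (distTriang C) ∧ X ∈ D') := by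
  refine ⟨fun hres M hM => ?_, IsTStructureOn.inter_of_exists_triangle hD' hUV⟩
  obtain ⟨X, Y, hX, hY, f, g, δ, hT⟩ := hres.exists_triangle M hM
  exact ⟨X, Y, hX.2, hY.2, f, g, δ, hT, hX.1⟩
end

section
/- Let D be a triangulated category with small coproducts and (X, Y, Z) a TTF triple on D (i.e. (X,Y) and (Y,Z) are both t-structures on D). Then the composite functor τ_X ∘ z : Z → X (inclusion of Z into D followed by the right adjoint of the inclusion of X) and the composite τ^Z ∘ x : X → Z (inclusion of X followed by the left adjoint of the inclusion of Z) are mutually quasi-inverse triangle equivalences. -/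
open CategoryTheory Limits Pretriangulated

universe v u

variable {C : Type u} [Category.{v} C] [Preadditive C] [Limits.HasZeroObject C]
  [HasShift C ℤ] [∀ n : ℤ, (shiftFunctor C n).Additive] [Pretriangulated C]

/-- A t-structure on a triangulated category `C`, given by a pair of strictly full
subcategories `(U, V)` (encoded as classes of objects): `U[1] ⊆ U`, `V[-1] ⊆ V`,
`Hom(U, V) = 0`, and every object fits in a distinguished triangle with outer vertices
in `U` and `V`. -/
structure IsTStructure (U V : Set C) : Prop where
  isoU : ∀ ⦃X Y : C⦄, (X ≅ Y) → X ∈ U → Y ∈ U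
  isoV : ∀ ⦃X Y : C⦄, (X ≅ Y) → X ∈ V → Y ∈ V
  shiftU : ∀ X ∈ U, X⟦(1 : ℤ)⟧ ∈ U
  shiftV : ∀ X ∈ V, X⟦(-1 : ℤ)⟧ ∈ V
  hom_zero : ∀ ⦃X Y : C⦄, X ∈ U → Y ∈ V → ∀ f : X ⟶ Y, f = 0
  exists_triangle : ∀ M : C, ∃ (X Y : C) (_ : X ∈ U) (_ : Y ∈ V)
    (f : X ⟶ M) (g : M ⟶ Y) (h : Y ⟶ X⟦(1 : ℤ)⟧), Triangle.mk f g h ∈ (distTriang C)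

/-!
The two composites are adjoint, `τZ ∘ x ⊣ τX ∘ z`, so it suffices that both are fully faithful.
For any `M`, the `(X, Y)`-triangle `A → M → B → A[1]` exhibits `A → M` as the coreflection of `M`
into `X`, because `Hom(X, Y) = Hom(X, Y[-1]) = 0`; and for `N ∈ Z`, precomposition with `A → M` is
bijective on `Hom(M, N)`, because `Hom(Y, Z) = Hom(Y[-1], Z) = 0`. Hence `τX` is bijective on
`Hom(M, N)` whenever `N ∈ Z`. Dually, the `(Y, Z)`-triangle `B → M → Z' → B[1]` shows that `τZ` is
bijective on `Hom(A, M)` whenever `A ∈ X`.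
-/

namespace CategoryTheory

namespace Adjunction

variable {D E : Type*} [Category D] [Category E] {F : D ⥤ E} {G : E ⥤ D}

lemma isIso_homEquiv_of_bijective (adj : F ⊣ G) {A : D} {M : E} (f : F.obj A ⟶ M)
    (hf : ∀ T, Function.Bijective (fun t : T ⟶ A => F.map t ≫ f)) :
    IsIso (adj.homEquiv A M f) :=
  isIso_of_yoneda_map_bijective _ fun T => by
    convert (adj.homEquiv T M).bijective.comp (hf T) using 1
    funext t
    exact (adj.homEquiv_naturality_left t f).symm

lemma isIso_homEquiv_symm_of_bijective (adj : F ⊣ G) {B : E} {M : D} (g : M ⟶ G.obj B)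
    (hg : ∀ T, Function.Bijective (fun t : B ⟶ T => g ≫ G.map t)) :
    IsIso ((adj.homEquiv M B).symm g) :=
  isIso_of_coyoneda_map_bijective _ fun T => by
    convert (adj.homEquiv M T).symm.bijective.comp (hg T) using 1
    funext t
    exact (adj.homEquiv_naturality_right_symm g t).symm

lemma map_bijective_of_universal (adj : F ⊣ G) {A : D} {M N : E} (f : F.obj A ⟶ M)
    (hf : ∀ T, Function.Bijective (fun t : T ⟶ A => F.map t ≫ f))
    (hN : Function.Bijective (fun h : M ⟶ N => f ≫ h)) :
    Function.Bijective (G.map : (M ⟶ N) → _) := by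
  have := adj.isIso_homEquiv_of_bijective f hf
  have hε : Function.Bijective (fun h : M ⟶ N => adj.counit.app M ≫ h) := by
    -- `f = F.map (adj.homEquiv A M f) ≫ adj.counit.app M`, and the first factor is invertible.
    rw [← (asIso (F.map (adj.homEquiv A M f))).symm.homFromEquiv.bijective.of_comp_iff']
    convert hN using 1
    funext h
    simp [homEquiv_unit]
  convert (adj.homEquiv _ N).bijective.comp hε using 1
  funext h
  simp [homEquiv_unit]

lemma map_bijective_of_couniversal (adj : F ⊣ G) {B : E} {M A : D} (g : M ⟶ G.obj B)
    (hg : ∀ T, Function.Bijective (fun t : B ⟶ T => g ≫ G.map t))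
    (hA : Function.Bijective (fun h : A ⟶ M => h ≫ g)) :
    Function.Bijective (F.map : (A ⟶ M) → _) := by
  have := adj.isIso_homEquiv_symm_of_bijective g hg
  have hη : Function.Bijective (fun h : A ⟶ M => h ≫ adj.unit.app M) := by
    -- `g = adj.unit.app M ≫ G.map ((adj.homEquiv M B).symm g)`, and the second factor is invertible.
    rw [← (asIso (G.map ((adj.homEquiv M B).symm g))).homToEquiv.bijective.of_comp_iff']
    convert hA using 1
    funext h
    simp [homEquiv_counit]
  convert (adj.homEquiv A _).symm.bijective.comp hη using 1
  funext h
  simp [homEquiv_counit]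

end Adjunction

namespace Pretriangulated

variable {T : Triangle C}

lemma comp_mor₁_bijective (hT : T ∈ distTriang C) {W : C}
    (h₃ : ∀ f : W ⟶ T.obj₃, f = 0) (h₃' : ∀ f : W ⟶ T.obj₃⟦(-1 : ℤ)⟧, f = 0) :
    Function.Bijective (fun f : W ⟶ T.obj₁ => f ≫ T.mor₁) := by
  refine ⟨fun α₁ α₂ (hα : α₁ ≫ T.mor₁ = α₂ ≫ T.mor₁) => ?_, fun β => ?_⟩
  · obtain ⟨γ, hγ⟩ := Triangle.coyoneda_exact₂ _ (inv_rot_of_distTriang _ hT) (α₁ - α₂)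
      (show (α₁ - α₂) ≫ T.mor₁ = 0 by rw [Preadditive.sub_comp, hα, sub_self])
    rw [← sub_eq_zero, hγ, show γ = 0 from h₃' γ]
    exact zero_comp
  · obtain ⟨α, rfl⟩ := Triangle.coyoneda_exact₂ T hT β (h₃ _)
    exact ⟨α, rfl⟩

lemma mor₁_comp_bijective (hT : T ∈ distTriang C) {N : C}
    (h₃ : ∀ f : T.obj₃ ⟶ N, f = 0) (h₃' : ∀ f : T.obj₃⟦(-1 : ℤ)⟧ ⟶ N, f = 0) :
    Function.Bijective (fun f : T.obj₂ ⟶ N => T.mor₁ ≫ f) := by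
  refine ⟨fun α₁ α₂ (hα : T.mor₁ ≫ α₁ = T.mor₁ ≫ α₂) => ?_, fun β => ?_⟩
  · obtain ⟨γ, hγ⟩ := Triangle.yoneda_exact₂ T hT (α₁ - α₂)
      (by rw [Preadditive.comp_sub, hα, sub_self])
    rw [← sub_eq_zero, hγ, show γ = 0 from h₃ γ, comp_zero]
  · obtain ⟨α, rfl⟩ := Triangle.yoneda_exact₂ _ (inv_rot_of_distTriang _ hT) β (h₃' _)
    exact ⟨α, rfl⟩

lemma comp_mor₂_bijective (hT : T ∈ distTriang C) {W : C}
    (h₁ : ∀ f : W ⟶ T.obj₁, f = 0) (h₁' : ∀ f : W ⟶ T.obj₁⟦(1 : ℤ)⟧, f = 0) :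
    Function.Bijective (fun f : W ⟶ T.obj₂ => f ≫ T.mor₂) := by
  refine ⟨fun α₁ α₂ (hα : α₁ ≫ T.mor₂ = α₂ ≫ T.mor₂) => ?_, fun β => ?_⟩
  · obtain ⟨γ, hγ⟩ := Triangle.coyoneda_exact₂ T hT (α₁ - α₂)
      (by rw [Preadditive.sub_comp, hα, sub_self])
    rw [← sub_eq_zero, hγ, show γ = 0 from h₁ γ, zero_comp]
  · obtain ⟨α, rfl⟩ := Triangle.coyoneda_exact₃ T hT β (h₁' _)
    exact ⟨α, rfl⟩

lemma mor₂_comp_bijective (hT : T ∈ distTriang C) {N : C}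
    (h₁ : ∀ f : T.obj₁ ⟶ N, f = 0) (h₁' : ∀ f : T.obj₁⟦(1 : ℤ)⟧ ⟶ N, f = 0) :
    Function.Bijective (fun f : T.obj₃ ⟶ N => T.mor₂ ≫ f) := by
  refine ⟨fun α₁ α₂ (hα : T.mor₂ ≫ α₁ = T.mor₂ ≫ α₂) => ?_, fun β => ?_⟩
  · obtain ⟨γ, hγ⟩ := Triangle.yoneda_exact₃ T hT (α₁ - α₂)
      (by rw [Preadditive.comp_sub, hα, sub_self])
    rw [← sub_eq_zero, hγ, show γ = 0 from h₁' γ, comp_zero]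
  · obtain ⟨α, rfl⟩ := Triangle.yoneda_exact₂ T hT β (h₁ _)
    exact ⟨α, rfl⟩

end Pretriangulated

end CategoryTheory

namespace IsTStructure

variable {X Y Z : Set C}

lemma coreflector_map_bijective (hXY : IsTStructure X Y) (hYZ : IsTStructure Y Z)
    {τX : C ⥤ ObjectProperty.FullSubcategory (· ∈ X)} (adjX : ObjectProperty.ι (· ∈ X) ⊣ τX)
    (M : C) {N : C} (hN : N ∈ Z) : Function.Bijective (τX.map : (M ⟶ N) → _) := by
  obtain ⟨A, B, hA, hB, a, _, _, hT⟩ := hXY.exists_triangle M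
  refine adjX.map_bijective_of_universal (A := ⟨A, hA⟩) a (fun T => ?_) ?_
  · exact (comp_mor₁_bijective hT (hXY.hom_zero T.2 hB)
      (hXY.hom_zero T.2 (hXY.shiftV B hB))).comp
      ((ObjectProperty.fullyFaithfulι _).map_bijective T _)
  · exact mor₁_comp_bijective hT (hYZ.hom_zero hB hN)
      (hYZ.hom_zero (hXY.shiftV B hB) hN)

lemma reflector_map_bijective (hXY : IsTStructure X Y) (hYZ : IsTStructure Y Z)
    {τZ : C ⥤ ObjectProperty.FullSubcategory (· ∈ Z)} (adjZ : τZ ⊣ ObjectProperty.ι (· ∈ Z))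
    {A : C} (hA : A ∈ X) (M : C) : Function.Bijective (τZ.map : (A ⟶ M) → _) := by
  obtain ⟨B, Z', hB, hZ', _, g, _, hT⟩ := hYZ.exists_triangle M
  refine adjZ.map_bijective_of_couniversal (B := ⟨Z', hZ'⟩) g (fun T => ?_) ?_
  · exact (mor₂_comp_bijective hT (hYZ.hom_zero hB T.2)
      (hYZ.hom_zero (hYZ.shiftU B hB) T.2)).comp
      ((ObjectProperty.fullyFaithfulι _).map_bijective _ T)
  · exact comp_mor₂_bijective hT (hXY.hom_zero hA hB)
      (hXY.hom_zero hA (hYZ.shiftU B hB))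

end IsTStructure

theorem stmt1_general (X Y Z : Set C)
    (hXY : IsTStructure X Y) (hYZ : IsTStructure Y Z)
    (τX : C ⥤ ObjectProperty.FullSubcategory (· ∈ X))
    (adjX : ObjectProperty.ι (· ∈ X) ⊣ τX)
    (τZ : C ⥤ ObjectProperty.FullSubcategory (· ∈ Z))
    (adjZ : τZ ⊣ ObjectProperty.ι (· ∈ Z)) :
    Nonempty ((ObjectProperty.ι (· ∈ Z) ⋙ τX) ⋙
        (ObjectProperty.ι (· ∈ X) ⋙ τZ) ≅ 𝟭 (ObjectProperty.FullSubcategory (· ∈ Z))) ∧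
    Nonempty ((ObjectProperty.ι (· ∈ X) ⋙ τZ) ⋙
        (ObjectProperty.ι (· ∈ Z) ⋙ τX) ≅ 𝟭 (ObjectProperty.FullSubcategory (· ∈ X))) := by
  obtain ⟨hR⟩ := (Functor.FullyFaithful.nonempty_iff_map_bijective
    (ObjectProperty.ι (· ∈ Z) ⋙ τX)).2 fun M N =>
      (hXY.coreflector_map_bijective hYZ adjX M.obj N.2).comp
        ((ObjectProperty.fullyFaithfulι _).map_bijective M N)
  obtain ⟨hL⟩ := (Functor.FullyFaithful.nonempty_iff_map_bijective
    (ObjectProperty.ι (· ∈ X) ⋙ τZ)).2 fun A M =>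
      (hXY.reflector_map_bijective hYZ adjZ A.2 M.obj).comp
        ((ObjectProperty.fullyFaithfulι _).map_bijective A M)
  have := hR.full
  have := hR.faithful
  have := hL.full
  have := hL.faithful
  let adj := adjX.comp adjZ
  exact ⟨⟨asIso adj.counit⟩, ⟨(asIso adj.unit).symm⟩⟩

/-- **TTF triples give equivalences between the outer classes.**
Let `C` be a triangulated category with small coproducts and `(X, Y, Z)` a TTF triple on `C`
(i.e. `(X, Y)` and `(Y, Z)` are t-structures).  Let `x`, `z` be the inclusions of the full
subcategories determined by `X` and `Z`, let `τX` be a right adjoint of `x` and `τZ` a left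
adjoint of `z`.  Then the composite functors `τX ∘ z : Z ⥤ X` and `τZ ∘ x : X ⥤ Z` are
mutually quasi-inverse equivalences. -/
theorem stmt1 [HasCoproducts.{v} C] (X Y Z : Set C)
    (hXY : IsTStructure X Y) (hYZ : IsTStructure Y Z)
    (τX : C ⥤ ObjectProperty.FullSubcategory (· ∈ X))
    (adjX : ObjectProperty.ι (· ∈ X) ⊣ τX)
    (τZ : C ⥤ ObjectProperty.FullSubcategory (· ∈ Z))
    (adjZ : τZ ⊣ ObjectProperty.ι (· ∈ Z)) :
    Nonempty ((ObjectProperty.ι (· ∈ Z) ⋙ τX) ⋙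
        (ObjectProperty.ι (· ∈ X) ⋙ τZ) ≅ 𝟭 (ObjectProperty.FullSubcategory (· ∈ Z))) ∧
    Nonempty ((ObjectProperty.ι (· ∈ X) ⋙ τZ) ⋙
        (ObjectProperty.ι (· ∈ Z) ⋙ τX) ≅ 𝟭 (ObjectProperty.FullSubcategory (· ∈ X))) :=
  stmt1_general X Y Z hXY hYZ τX adjX τZ adjZ
end

section
/- Let A be a small dg category whose Hom-complexes have cohomology concentrated in degrees (−∞, m] for some integer m. If a dg A-module M belongs to D^{≤s}A (the shift by −s of the aisle generated by the representable modules), then H^i M(A) = 0 for every object A of A and every integer i > m + s. Moreover, if m = 0, the converse holds: a dg module M with H^i M(A) = 0 for all i > s and all objects A lies in D^{≤s}A. -/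
open CategoryTheory Limits Pretriangulated

universe v u

variable {C : Type u} [Category.{v} C] [Preadditive C] [Limits.HasZeroObject C]
  [HasShift C ℤ] [∀ n : ℤ, (shiftFunctor C n).Additive] [Pretriangulated C]

/-- `S` is a strictly full suspended subcategory of `C` containing `Q` and closed under
small coproducts. -/
def SuspClosed (Q S : Set C) : Prop :=
  Q ⊆ S ∧
  (∀ ⦃X Y : C⦄, (X ≅ Y) → X ∈ S → Y ∈ S) ∧
  (∀ X ∈ S, X⟦(1 : ℤ)⟧ ∈ S) ∧
  (∀ T ∈ (distTriang C), T.obj₁ ∈ S → T.obj₃ ∈ S → T.obj₂ ∈ S) ∧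
  (∀ (ι : Type v) (f : ι → C) (c : Cofan f), IsColimit c → (∀ i, f i ∈ S) → c.pt ∈ S)

/-- `Susp Q`: the smallest full suspended subcategory of `C` containing `Q` and closed under
small coproducts. -/
def Susp (Q : Set C) : Set C := ⋂₀ {S | SuspClosed Q S}

/-- The canonical map `⨁ᵢ Hom(P, fᵢ) ⟶ Hom(P, pt)` induced by a cofan. -/
noncomputable def sumToHom {ι : Type v} (f : ι → C) (c : Cofan f) (P : C) :
    DirectSum ι (fun i => P ⟶ f i) →+ (P ⟶ c.pt) :=
  letI := Classical.decEq ι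
  DirectSum.toAddMonoid (fun i => AddMonoidHom.mk' (fun g => g ≫ c.inj i)
    (fun _ _ => Preadditive.add_comp _ _ _ _ _ _))

/-- `P` is a compact object of `C`: `Hom(P, ?)` takes small coproducts to direct sums. -/
def IsCompactObj (P : C) : Prop :=
  ∀ (ι : Type v) (f : ι → C) (c : Cofan f), IsColimit c →
    Function.Bijective (sumToHom f c P)

/-!
Since the `G i` are compact, `Hom(G i, -⟦n⟧)` turns coproducts into direct sums, and it turns
triangles into long exact sequences; hence the objects with `H^n = 0` for `n > m` form a
suspended subcategory closed under coproducts, and it contains the `G i`.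

For the converse (`m = 0`), approximate `N` (with `H^n N = 0` for `n > 0`) by a tower
`X₀ → X₁ → ⋯` over `N` in `Susp G`: `X₀` is a coproduct of `(G i)⟦u⟧`, `u ≥ 0`, covering all
maps from such objects to `N`, and `X_{k+1}` is the cone of a map from such a coproduct onto the
kernel of `Hom(-, X_k) → Hom(-, N)`. The homotopy colimit `Y`, the cone of `1 - shift` on `∐ X_k`,
lies in `Susp G`, and by compactness `Hom((G i)⟦u⟧, Y) = colim_k Hom((G i)⟦u⟧, X_k)`. So `Y → N`
is bijective on maps from every `(G i)⟦u⟧`, and it is an isomorphism because the `G i` generate.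
-/

section Preadditive

variable {D : Type u} [Category.{v} D] [Preadditive D]

lemma forall_hom_eq_zero_congr {X X' Y Y' : D} (α : X ≅ X') (β : Y ≅ Y') :
    (∀ f : X ⟶ Y, f = 0) ↔ ∀ f : X' ⟶ Y', f = 0 :=
  (α.homCongr β).forall_congr fun f => by simp [Iso.homCongr_apply]

noncomputable def cofanProj {β : Type*} [DecidableEq β] {f : β → D} {c : Cofan f}
    (hc : IsColimit c) (k : β) : c.pt ⟶ f k :=
  Cofan.IsColimit.desc hc (Pi.single (M := fun j => f j ⟶ f k) k (𝟙 (f k)))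

lemma inj_cofanProj_self {β : Type*} [DecidableEq β] {f : β → D} {c : Cofan f}
    (hc : IsColimit c) (k : β) : c.inj k ≫ cofanProj hc k = 𝟙 (f k) := by
  simp [cofanProj]

lemma inj_cofanProj_of_ne {β : Type*} [DecidableEq β] {f : β → D} {c : Cofan f}
    (hc : IsColimit c) {j k : β} (h : j ≠ k) : c.inj j ≫ cofanProj hc k = 0 := by
  simp [cofanProj, h]

lemma sumToHom_of {β : Type v} [DecidableEq β] (f : β → D) (c : Cofan f) (P : D)
    (j : β) (g : P ⟶ f j) :
    sumToHom f c P (DirectSum.of (fun i => P ⟶ f i) j g) = g ≫ c.inj j := by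
  rw [sumToHom, Subsingleton.elim (Classical.decEq β) ‹_›, DirectSum.toAddMonoid_of]
  rfl

lemma sumToHom_comp_cofanProj {β : Type v} [DecidableEq β] {f : β → D} {c : Cofan f}
    (hc : IsColimit c) (P : D) (x : DirectSum β fun j => P ⟶ f j) (k : β) :
    sumToHom f c P x ≫ cofanProj hc k = x k := by
  induction x using DirectSum.induction_on with
  | zero => simp
  | of j g =>
    rw [sumToHom_of, Category.assoc]
    by_cases h : j = k
    · subst h; simp [inj_cofanProj_self]
    · simp [inj_cofanProj_of_ne hc h, DirectSum.of_eq_of_ne _ _ _ (Ne.symm h)]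
  | add x y hx hy => simp [Preadditive.add_comp, hx, hy]

lemma IsCompactObj.eq_zero_of_comp_cofanProj {P : D} (hP : IsCompactObj P) {β : Type v}
    [DecidableEq β] {f : β → D} {c : Cofan f} (hc : IsColimit c) {t : P ⟶ c.pt}
    (ht : ∀ k, t ≫ cofanProj hc k = 0) : t = 0 := by
  obtain ⟨x, rfl⟩ := (hP β f c hc).2 t
  have hx : x = 0 := DFinsupp.ext fun k => by rw [← sumToHom_comp_cofanProj hc, ht]; rfl
  rw [hx, map_zero]

lemma IsCompactObj.eq_zero_of_cofan {P : D} (hP : IsCompactObj P) {β : Type v} {f : β → D}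
    {c : Cofan f} (hc : IsColimit c) (h : ∀ k (g : P ⟶ f k), g = 0) (t : P ⟶ c.pt) : t = 0 := by
  classical
  exact hP.eq_zero_of_comp_cofanProj hc fun k => h k _

section Telescope

variable {X : ℕ → D} (d : ∀ k, X k ⟶ X (k + 1)) {c : Cofan fun k : ULift.{v} ℕ => X k.down}

lemma IsCompactObj.eq_zero_of_comp_telescope {P : D} (hP : IsCompactObj P) (hc : IsColimit c)
    {φ : c.pt ⟶ c.pt} (hφ : ∀ k, c.inj ⟨k⟩ ≫ φ = c.inj ⟨k⟩ - d k ≫ c.inj ⟨k + 1⟩)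
    {t : P ⟶ c.pt} (ht : t ≫ φ = 0) : t = 0 := by
  classical
  let π k := cofanProj hc (⟨k⟩ : ULift ℕ)
  have hφ₀ : φ ≫ π 0 = π 0 := Cofan.IsColimit.hom_ext hc _ _ fun ⟨j⟩ => by
    rw [← Category.assoc, hφ, Preadditive.sub_comp, Category.assoc,
      inj_cofanProj_of_ne hc (j := ⟨j + 1⟩) (by simp), comp_zero, sub_zero]
  have hφ_succ (k : ℕ) : φ ≫ π (k + 1) = π (k + 1) - π k ≫ d k :=
    Cofan.IsColimit.hom_ext hc _ _ fun ⟨j⟩ => by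
      rw [← Category.assoc, hφ, Preadditive.sub_comp, Preadditive.comp_sub, Category.assoc,
        ← Category.assoc (c.inj _) (π k)]
      by_cases h : j = k
      · subst h; simp [π, inj_cofanProj_self, inj_cofanProj_of_ne]
      · simp [π, inj_cofanProj_of_ne, h]
  refine hP.eq_zero_of_comp_cofanProj hc fun ⟨k⟩ => show t ≫ π k = 0 from ?_
  induction k with
  | zero => rw [← hφ₀, ← Category.assoc, ht, zero_comp]
  | succ k ih =>
    calc t ≫ π (k + 1) = t ≫ φ ≫ π (k + 1) + (t ≫ π k) ≫ d k := by
          rw [hφ_succ, Preadditive.comp_sub, Category.assoc]; abel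
      _ = 0 := by rw [← Category.assoc, ht, show t ≫ π k = 0 from ih]; simp

lemma inj_comp_eq_of_telescope {φ : c.pt ⟶ c.pt}
    (hφ : ∀ k, c.inj ⟨k⟩ ≫ φ = c.inj ⟨k⟩ - d k ≫ c.inj ⟨k + 1⟩) {T : D} {e : c.pt ⟶ T}
    (he : φ ≫ e = 0) (k : ℕ) : c.inj ⟨k⟩ ≫ e = d k ≫ c.inj ⟨k + 1⟩ ≫ e := by
  have h : (c.inj ⟨k⟩ ≫ φ) ≫ e = 0 := by rw [Category.assoc, he, comp_zero]
  rwa [hφ, Preadditive.sub_comp, sub_eq_zero, Category.assoc] at h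

lemma IsCompactObj.exists_comp_eq_of_telescope {P : D} (hP : IsCompactObj P)
    (hc : IsColimit c) {T : D} {e : c.pt ⟶ T}
    (he : ∀ k, c.inj ⟨k⟩ ≫ e = d k ≫ c.inj ⟨k + 1⟩ ≫ e) (t : P ⟶ c.pt) :
    ∃ (K : ℕ) (g : P ⟶ X K), t ≫ e = g ≫ c.inj ⟨K⟩ ≫ e := by
  classical
  have push {k K : ℕ} (hkK : k ≤ K) (g : P ⟶ X k) :
      ∃ g' : P ⟶ X K, g ≫ c.inj ⟨k⟩ ≫ e = g' ≫ c.inj ⟨K⟩ ≫ e := by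
    induction K, hkK using Nat.le_induction with
    | base => exact ⟨g, rfl⟩
    | succ K _ ih =>
      obtain ⟨g', hg'⟩ := ih
      exact ⟨g' ≫ d K, by rw [hg', he, Category.assoc]⟩
  obtain ⟨x, rfl⟩ := (hP _ _ c hc).2 t
  induction x using DirectSum.induction_on with
  | zero => exact ⟨0, 0, by simp⟩
  | of k g => exact ⟨k.down, g, by rw [sumToHom_of, Category.assoc]⟩
  | add x y hx hy =>
    obtain ⟨K₁, g₁, h₁⟩ := hx
    obtain ⟨K₂, g₂, h₂⟩ := hy
    obtain ⟨g₁', h₁'⟩ := push (le_max_left K₁ K₂) g₁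
    obtain ⟨g₂', h₂'⟩ := push (le_max_right K₁ K₂) g₂
    exact ⟨max K₁ K₂, g₁' + g₂', by
      rw [map_add, Preadditive.add_comp, h₁, h₂, h₁', h₂', Preadditive.add_comp]⟩

end Telescope

end Preadditive

section Shift

variable {D : Type u} [Category.{v} D] [Preadditive D] [HasShift D ℤ]

/-- `D^{≤k}` described by cohomology, using `Hom((G i)⟦u⟧, X) ≅ H^{-u} X(A_i)`. -/
def cohomologyLE {ι : Type*} (G : ι → D) (k : ℤ) : Set D :=
  {X | ∀ i (u : ℤ), u < -k → ∀ f : (G i)⟦u⟧ ⟶ X, f = 0}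

variable {ι : Type*} {G : ι → D} {k : ℤ}

lemma cohomologyLE_mono {k' : ℤ} (h : k ≤ k') : cohomologyLE G k ⊆ cohomologyLE G k' :=
  fun _ hX i u hu => hX i u (by omega)

variable [∀ n : ℤ, (shiftFunctor D n).Additive]

noncomputable def shiftHomEquiv (a b : ℤ) (h : a + b = 0) (X Y : D) :
    (X⟦a⟧ ⟶ Y) ≃+ (X ⟶ Y⟦b⟧) :=
  haveI : (shiftEquiv' D a b h).functor.Additive := inferInstanceAs (shiftFunctor D a).Additive
  (shiftEquiv' D a b h).toAdjunction.homAddEquiv X Y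

lemma shiftHomEquiv_comp (a b : ℤ) (h : a + b = 0) {X Y Z : D} (f : X⟦a⟧ ⟶ Y) (g : Y ⟶ Z) :
    shiftHomEquiv a b h X Z (f ≫ g) = shiftHomEquiv a b h X Y f ≫ g⟦b⟧' :=
  Adjunction.homEquiv_naturality_right _ f g

lemma forall_shift_hom_eq_zero_iff (a b : ℤ) (h : a + b = 0) (X Y : D) :
    (∀ f : X⟦a⟧ ⟶ Y, f = 0) ↔ ∀ g : X ⟶ Y⟦b⟧, g = 0 :=
  (shiftHomEquiv a b h X Y).toEquiv.forall_congr
    fun _ => (shiftHomEquiv a b h X Y).map_eq_zero_iff.symm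

noncomputable def isColimitShiftCofan {β : Type v} {f : β → D} {c : Cofan f} (hc : IsColimit c)
    (n : ℤ) : IsColimit (Cofan.mk (c.pt⟦n⟧) fun j => (c.inj j)⟦n⟧') :=
  isColimitCofanMkObjOfIsColimit (shiftFunctor D n) f c.inj hc

lemma IsCompactObj.shift {P : D} (hP : IsCompactObj P) (n : ℤ) : IsCompactObj (P⟦n⟧) := by
  classical
  intro β f c hc
  let E := shiftHomEquiv n (-n) (add_neg_cancel n) P
  let Φ : (DirectSum β fun j => P⟦n⟧ ⟶ f j) ≃+ DirectSum β fun j => P ⟶ (f j)⟦-n⟧ :=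
    DFinsupp.mapRange.addEquiv fun j => E (f j)
  let c' := Cofan.mk (c.pt⟦-n⟧) fun j => (c.inj j)⟦-n⟧'
  have hcomm : (E c.pt).toAddMonoidHom.comp (sumToHom f c (P⟦n⟧)) =
      (sumToHom _ c' P).comp Φ.toAddMonoidHom := by
    refine DirectSum.addHom_ext fun j g => ?_
    have hΦ : Φ (DirectSum.of _ j g) = DirectSum.of _ j (E (f j) g) :=
      DFinsupp.mapRange_single (hf := fun _ => map_zero _)
    simp only [AddMonoidHom.comp_apply, AddEquiv.coe_toAddMonoidHom, hΦ, sumToHom_of]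
    exact shiftHomEquiv_comp _ _ _ g (c.inj j)
  have hbij := hP β _ _ (isColimitShiftCofan hc (-n))
  rw [← Function.Bijective.of_comp_iff' (E c.pt).bijective]
  have : ⇑(E c.pt) ∘ ⇑(sumToHom f c (P⟦n⟧)) = ⇑(sumToHom _ c' P) ∘ ⇑Φ :=
    congrArg DFunLike.coe hcomm
  rw [this]
  exact hbij.comp Φ.bijective

lemma mem_cohomologyLE_iff {X : D} :
    X ∈ cohomologyLE G k ↔ ∀ i (n : ℤ), k < n → ∀ f : G i ⟶ X⟦n⟧, f = 0 :=
  forall_congr' fun i =>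
    ⟨fun h n hn => (forall_shift_hom_eq_zero_iff (-n) n (by omega) _ _).1 (h (-n) (by omega)),
      fun h u hu => (forall_shift_hom_eq_zero_iff u (-u) (by omega) _ _).2 (h (-u) (by omega))⟩

lemma shift_mem_cohomologyLE_iff {X : D} (a : ℤ) :
    X⟦a⟧ ∈ cohomologyLE G k ↔ X ∈ cohomologyLE G (k + a) := by
  simp only [mem_cohomologyLE_iff]
  refine forall_congr' fun i => ⟨fun h n hn => ?_, fun h n hn => ?_⟩
  · exact (forall_hom_eq_zero_congr (Iso.refl _)
      ((shiftFunctorAdd' D a (n - a) n (by omega)).app X).symm).1 (h (n - a) (by omega))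
  · exact (forall_hom_eq_zero_congr (Iso.refl _) ((shiftFunctorAdd D a n).app X)).1
      (h (a + n) (by omega))

end Shift

section Susp

variable {Q S : Set C}

lemma suspClosed_susp (Q : Set C) : SuspClosed Q (Susp Q) :=
  ⟨fun _ hX _ hS => hS.1 hX,
    fun _ _ e hX S hS => hS.2.1 e (hX S hS),
    fun X hX S hS => hS.2.2.1 X (hX S hS),
    fun T hT h₁ h₃ S hS => hS.2.2.2.1 T hT (h₁ S hS) (h₃ S hS),
    fun β f c hc hf S hS => hS.2.2.2.2 β f c hc fun j => hf j S hS⟩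

lemma susp_subset_of_suspClosed (hS : SuspClosed Q S) : Susp Q ⊆ S :=
  fun _ hX => hX S hS

lemma SuspClosed.mem_of_iso (hS : SuspClosed Q S) {X Y : C} (e : X ≅ Y) (hX : X ∈ S) : Y ∈ S :=
  hS.2.1 e hX

lemma SuspClosed.cofan_mem (hS : SuspClosed Q S) {β : Type v} {f : β → C} {c : Cofan f}
    (hc : IsColimit c) (hf : ∀ j, f j ∈ S) : c.pt ∈ S :=
  hS.2.2.2.2 β f c hc hf

lemma SuspClosed.cone_mem (hS : SuspClosed Q S) {T : Triangle C} (hT : T ∈ distTriang C)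
    (h₁ : T.obj₁ ∈ S) (h₂ : T.obj₂ ∈ S) : T.obj₃ ∈ S :=
  hS.2.2.2.1 T.rotate (rot_of_distTriang T hT) h₂ (hS.2.2.1 _ h₁)

lemma SuspClosed.shift_mem (hS : SuspClosed Q S) {X : C} (hX : X ∈ S) {n : ℤ} (hn : 0 ≤ n) :
    X⟦n⟧ ∈ S := by
  obtain ⟨k, rfl⟩ := Int.eq_ofNat_of_zero_le hn
  induction k with
  | zero => exact hS.mem_of_iso ((shiftFunctorZero C ℤ).symm.app X) hX
  | succ k ih =>
    exact hS.mem_of_iso ((shiftFunctorAdd' C (k : ℤ) 1 (k + 1) rfl).symm.app X)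
      (hS.2.2.1 _ (ih (by omega)))

end Susp

lemma IsCompactObj.exists_eq_comp_of_telescope_triangle {X : ℕ → C} (d : ∀ k, X k ⟶ X (k + 1))
    {c : Cofan fun k : ULift.{v} ℕ => X k.down} (hc : IsColimit c) {φ : c.pt ⟶ c.pt}
    (hφ : ∀ k, c.inj ⟨k⟩ ≫ φ = c.inj ⟨k⟩ - d k ≫ c.inj ⟨k + 1⟩) {Y : C} {p : c.pt ⟶ Y}
    {w : Y ⟶ c.pt⟦(1 : ℤ)⟧} (hT : Triangle.mk φ p w ∈ distTriang C) {P : C}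
    (hP : IsCompactObj P) (v : P ⟶ Y) : ∃ (K : ℕ) (g : P ⟶ X K), v = g ≫ c.inj ⟨K⟩ ≫ p := by
  have hφ₁ (k : ℕ) : (c.inj ⟨k⟩)⟦(1 : ℤ)⟧' ≫ φ⟦(1 : ℤ)⟧' =
      (c.inj ⟨k⟩)⟦(1 : ℤ)⟧' - (d k)⟦(1 : ℤ)⟧' ≫ (c.inj ⟨k + 1⟩)⟦(1 : ℤ)⟧' := by
    rw [← Functor.map_comp, hφ, Functor.map_sub, Functor.map_comp]
  have hwφ : w ≫ φ⟦(1 : ℤ)⟧' = 0 := comp_distTriang_mor_zero₃₁ _ hT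
  have hw : v ≫ w = 0 :=
    hP.eq_zero_of_comp_telescope (fun k => (d k)⟦(1 : ℤ)⟧') (isColimitShiftCofan hc 1) hφ₁
      (by rw [Category.assoc, hwφ, comp_zero])
  obtain ⟨t, rfl⟩ := Triangle.coyoneda_exact₃ _ hT v hw
  exact hP.exists_comp_eq_of_telescope d hc
    (inj_comp_eq_of_telescope d hφ (comp_distTriang_mor_zero₁₂ _ hT)) t

section Generators

variable {ι : Type v} {G : ι → C}

lemma suspClosed_cohomologyLE (hcpt : ∀ i, IsCompactObj (G i))
    {k : ℤ} (hG : ∀ j, G j ∈ cohomologyLE G k) : SuspClosed (Set.range G) (cohomologyLE G k) := by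
  refine ⟨Set.range_subset_iff.2 hG, fun X Y e hX i u hu => ?_, fun X hX => ?_,
    fun T hT h₁ h₃ i u hu f => ?_, fun β f c hc hf i u hu => ?_⟩
  · exact (forall_hom_eq_zero_congr (Iso.refl _) e).1 (hX i u hu)
  · exact (shift_mem_cohomologyLE_iff 1).2 (cohomologyLE_mono (by omega) hX)
  · obtain ⟨g, rfl⟩ := Triangle.coyoneda_exact₂ T hT f (h₃ i u hu _)
    rw [h₁ i u hu g, zero_comp]
  · exact ((hcpt i).shift u).eq_zero_of_cofan hc fun j => hf j i u hu

lemma isIso_of_forall_bijective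
    (hgen : ∀ M : C, (∀ (i : ι) (n : ℤ) (f : (G i)⟦n⟧ ⟶ M), f = 0) → IsZero M)
    {Y N : C} (r : Y ⟶ N) (hinj : ∀ i (u : ℤ) (v : (G i)⟦u⟧ ⟶ Y), v ≫ r = 0 → v = 0)
    (hsurj : ∀ i (u : ℤ) (h : (G i)⟦u⟧ ⟶ N), ∃ v, v ≫ r = h) : IsIso r := by
  obtain ⟨Z, a, b, hT⟩ := distinguished_cocone_triangle r
  refine (Triangle.isZero₃_iff_isIso₁ _ hT).1 (hgen Z fun i n f => ?_)
  have hb : f ≫ b = 0 := by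
    -- `f ≫ b` is adjoint to a map `g` out of `(G i)⟦n⟧⟦-1⟧ ≅ (G i)⟦n - 1⟧`, killed by `r`.
    obtain ⟨g, hg⟩ := (shiftHomEquiv (-1) 1 (by omega) _ _).surjective (f ≫ b)
    have hbr : b ≫ r⟦(1 : ℤ)⟧' = 0 := by
      have h : b ≫ (-r⟦(1 : ℤ)⟧') = 0 := comp_distTriang_mor_zero₂₃ _ (rot_of_distTriang _ hT)
      rwa [Preadditive.comp_neg, neg_eq_zero] at h
    have hgr : g ≫ r = 0 := by
      rw [← (shiftHomEquiv (-1) 1 (by omega) _ _).map_eq_zero_iff, shiftHomEquiv_comp, hg,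
        Category.assoc, hbr, comp_zero]
    let e := (shiftFunctorAdd C n (-1)).app (G i)
    have : e.hom ≫ g = 0 := hinj i _ _ (by rw [Category.assoc, hgr, comp_zero])
    rw [← hg, (Preadditive.IsIso.comp_left_eq_zero e.hom g).1 this, map_zero]
  obtain ⟨h, rfl⟩ : ∃ h, f = h ≫ a := Triangle.coyoneda_exact₃ _ hT f hb
  obtain ⟨v, rfl⟩ := hsurj i n h
  have hra : r ≫ a = 0 := comp_distTriang_mor_zero₁₂ _ hT
  rw [Category.assoc, hra, comp_zero]

variable [HasCoproducts.{v} C]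

lemma exists_cover (Z : C) : ∃ (W : C) (ψ : W ⟶ Z), W ∈ Susp (Set.range G) ∧
    ∀ i (u : ℤ), 0 ≤ u → ∀ h : (G i)⟦u⟧ ⟶ Z, ∃ g, g ≫ ψ = h := by
  let F : (Σ i, Σ u : {u : ℤ // 0 ≤ u}, (G i)⟦u.1⟧ ⟶ Z) → C := fun j => (G j.1)⟦j.2.1.1⟧
  refine ⟨∐ F, Sigma.desc fun j => j.2.2, ?_, fun i u hu h => ⟨Sigma.ι F ⟨i, ⟨u, hu⟩, h⟩, by simp⟩⟩
  exact (suspClosed_susp _).cofan_mem (colimit.isColimit _) fun j =>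
    (suspClosed_susp _).shift_mem ((suspClosed_susp _).1 (Set.mem_range_self j.1)) j.2.1.2

lemma exists_map_killing_kernel {X N : C} (hX : X ∈ Susp (Set.range G)) (hX₀ : X ∈ cohomologyLE G 0)
    (q : X ⟶ N) : ∃ (X' : C) (d : X ⟶ X') (q' : X' ⟶ N), X' ∈ Susp (Set.range G) ∧
      d ≫ q' = q ∧ ∀ i (u : ℤ) (g : (G i)⟦u⟧ ⟶ X), g ≫ q = 0 → g ≫ d = 0 := by
  obtain ⟨Z, δ, b, hT⟩ := distinguished_cocone_triangle₁ q
  obtain ⟨W, ψ, hW, hψ⟩ := exists_cover (G := G) Z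
  obtain ⟨X', d, w, hTd⟩ := distinguished_cocone_triangle (ψ ≫ δ)
  have hδq : δ ≫ q = 0 := comp_distTriang_mor_zero₁₂ _ hT
  have hψδd : (ψ ≫ δ) ≫ d = 0 := comp_distTriang_mor_zero₁₂ _ hTd
  obtain ⟨q', hq'⟩ : ∃ q' : X' ⟶ N, q = d ≫ q' :=
    Triangle.yoneda_exact₂ _ hTd q (show (ψ ≫ δ) ≫ q = 0 by rw [Category.assoc, hδq, comp_zero])
  refine ⟨X', d, q', (suspClosed_susp _).cone_mem hTd hW hX, hq'.symm, fun i u g hg => ?_⟩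
  rcases lt_or_ge u 0 with hu | hu
  · rw [hX₀ i u (by omega) g, zero_comp]
  · obtain ⟨h, rfl⟩ : ∃ h, g = h ≫ δ := Triangle.coyoneda_exact₂ _ hT g hg
    obtain ⟨g', rfl⟩ := hψ i u hu h
    rw [Category.assoc, Category.assoc, ← Category.assoc ψ, hψδd, comp_zero]

lemma exists_tower (hcpt : ∀ i, IsCompactObj (G i)) (hG₀ : ∀ j, G j ∈ cohomologyLE G 0)
    (N : C) : ∃ (X : ℕ → C) (q : ∀ k, X k ⟶ N) (d : ∀ k, X k ⟶ X (k + 1)),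
      (∀ k, X k ∈ Susp (Set.range G)) ∧ (∀ k, d k ≫ q (k + 1) = q k) ∧
      (∀ k i (u : ℤ) (g : (G i)⟦u⟧ ⟶ X k), g ≫ q k = 0 → g ≫ d k = 0) ∧
      ∀ i (u : ℤ), 0 ≤ u → ∀ h : (G i)⟦u⟧ ⟶ N, ∃ g, g ≫ q 0 = h := by
  have hle := susp_subset_of_suspClosed (suspClosed_cohomologyLE hcpt hG₀)
  choose X' d q' hX' hdq hkill using
    fun (X : Susp (Set.range G)) (q : X.1 ⟶ N) => exists_map_killing_kernel X.2 (hle X.2) q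
  obtain ⟨X₀, q₀, hX₀, hq₀⟩ := exists_cover (G := G) N
  let stage (k : ℕ) : Σ X : Susp (Set.range G), X.1 ⟶ N :=
    Nat.rec ⟨⟨X₀, hX₀⟩, q₀⟩ (fun _ s => ⟨⟨X' s.1 s.2, hX' s.1 s.2⟩, q' s.1 s.2⟩) k
  exact ⟨fun k => (stage k).1.1, fun k => (stage k).2, fun k => d (stage k).1 (stage k).2,
    fun k => (stage k).1.2, fun k => hdq _ _, fun k => hkill _ _, hq₀⟩

lemma mem_susp_of_mem_cohomologyLE_zero (hcpt : ∀ i, IsCompactObj (G i))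
    (hgen : ∀ M : C, (∀ (i : ι) (n : ℤ) (f : (G i)⟦n⟧ ⟶ M), f = 0) → IsZero M)
    (hG₀ : ∀ j, G j ∈ cohomologyLE G 0) {N : C} (hN : N ∈ cohomologyLE G 0) :
    N ∈ Susp (Set.range G) := by
  obtain ⟨X, q, d, hX, hdq, hkill, hq₀⟩ := exists_tower hcpt hG₀ N
  let c : Cofan fun k : ULift.{v} ℕ => X k.down := colimit.cocone _
  have hc : IsColimit c := colimit.isColimit _
  let φ := Cofan.IsColimit.desc hc fun k => c.inj k - d k.down ≫ c.inj ⟨k.down + 1⟩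
  have hφ (k : ℕ) : c.inj ⟨k⟩ ≫ φ = c.inj ⟨k⟩ - d k ≫ c.inj ⟨k + 1⟩ :=
    Cofan.IsColimit.fac hc _ _
  let qTel := Cofan.IsColimit.desc hc fun k => q k.down
  obtain ⟨Y, p, w, hT⟩ := distinguished_cocone_triangle φ
  have hc_mem : c.pt ∈ Susp (Set.range G) := (suspClosed_susp _).cofan_mem hc fun k => hX k.down
  have hY : Y ∈ Susp (Set.range G) := (suspClosed_susp _).cone_mem hT hc_mem hc_mem
  have hφq : φ ≫ qTel = 0 := Cofan.IsColimit.hom_ext hc _ _ fun ⟨k⟩ => by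
    rw [← Category.assoc, hφ, Preadditive.sub_comp, Category.assoc]
    simp [qTel, hdq]
  obtain ⟨r, hr⟩ : ∃ r : Y ⟶ N, qTel = p ≫ r := Triangle.yoneda_exact₂ _ hT qTel hφq
  have hpr (k : ℕ) : c.inj ⟨k⟩ ≫ p ≫ r = q k := by
    rw [← hr]; exact Cofan.IsColimit.fac hc _ _
  have hφp : φ ≫ p = 0 := comp_distTriang_mor_zero₁₂ _ hT
  have hp := inj_comp_eq_of_telescope d hφ hφp
  have : IsIso r := by
    refine isIso_of_forall_bijective hgen r (fun i u v hv => ?_) (fun i u h => ?_)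
    · obtain ⟨K, g, rfl⟩ := ((hcpt i).shift u).exists_eq_comp_of_telescope_triangle d hc hφ hT v
      have hgq : g ≫ q K = 0 := by rw [← hpr]; simpa only [Category.assoc] using hv
      rw [hp, ← Category.assoc, hkill K i u g hgq, zero_comp]
    · rcases lt_or_ge u 0 with hu | hu
      · exact ⟨0, by rw [hN i u (by omega) h, zero_comp]⟩
      · obtain ⟨g, rfl⟩ := hq₀ i u hu h
        exact ⟨g ≫ c.inj ⟨0⟩ ≫ p, by rw [Category.assoc, Category.assoc, hpr]⟩
  exact (suspClosed_susp _).mem_of_iso (asIso r) hY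

end Generators

/-- The derived category `D𝒜` is modelled by a triangulated category `C` with small coproducts
and compact generators `G i` (the representables `A^∧`), so that `H^n M(A_i) = Hom(G i, M⟦n⟧)`,
and `D^{≤s}𝒜 = {M | M⟦s⟧ ∈ Susp (Set.range G)}`. -/
theorem stmt4 [HasCoproducts.{v} C] {ι : Type v} (G : ι → C)
    (hcpt : ∀ i, IsCompactObj (G i))
    (hgen : ∀ M : C, (∀ (i : ι) (n : ℤ) (f : (G i)⟦n⟧ ⟶ M), f = 0) → IsZero M)
    (m : ℤ) (hcoh : ∀ (i j : ι) (n : ℤ), m < n → ∀ f : G i ⟶ (G j)⟦n⟧, f = 0)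
    (s : ℤ) (M : C) :
    (M⟦s⟧ ∈ Susp (Set.range G) →
      ∀ (i : ι) (n : ℤ), m + s < n → ∀ f : G i ⟶ M⟦n⟧, f = 0) ∧
    (m = 0 → (∀ (i : ι) (n : ℤ), s < n → ∀ f : G i ⟶ M⟦n⟧, f = 0) →
      M⟦s⟧ ∈ Susp (Set.range G)) := by
  have hG : ∀ j, G j ∈ cohomologyLE G m := fun j => mem_cohomologyLE_iff.2 fun i n => hcoh i j n
  refine ⟨fun hM => ?_, fun hm hM => ?_⟩
  · have hMs := susp_subset_of_suspClosed (suspClosed_cohomologyLE hcpt hG) hM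
    exact mem_cohomologyLE_iff.1 ((shift_mem_cohomologyLE_iff s).1 hMs)
  · subst hm
    refine mem_susp_of_mem_cohomologyLE_zero hcpt hgen hG ((shift_mem_cohomologyLE_iff s).2 ?_)
    exact mem_cohomologyLE_iff.2 (by simpa using hM)
end

section
/- Every countable von Neumann regular ring is hereditary on both sides, i.e. every left ideal and every right ideal is projective. -/
/-!
Kaplansky's argument. Let `a₀, a₁, …` generate a left ideal `I`. Regularity lets one build
idempotents `0 = e₀, e₁, e₂, … ∈ I` with `eₙ eₙ₊₁ = eₙ = eₙ₊₁ eₙ` and `aₙ eₙ₊₁ = aₙ`, so that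
every `x ∈ I` satisfies `x eₙ = x` for all large `n`. The differences `dₙ = eₙ₊₁ - eₙ` are
idempotents of `I` with `x = ∑ₙ x dₙ` (a telescoping sum), hence `x ↦ (x dₙ)ₙ` splits the
surjection `(ℕ →₀ R) → I`, `(rₙ) ↦ ∑ rₙ dₙ`. Right ideals are left ideals of `Rᵐᵒᵖ`.
-/

def IsVonNeumannRegular (R : Type*) [Mul R] : Prop :=
  ∀ a : R, ∃ x : R, a * x * a = a

theorem IsVonNeumannRegular.op {R : Type*} [Semigroup R] (hR : IsVonNeumannRegular R) :
    IsVonNeumannRegular Rᵐᵒᵖ := fun a ↦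
  let ⟨x, hx⟩ := hR a.unop
  ⟨.op x, MulOpposite.unop_injective <| by simpa [mul_assoc] using hx⟩

variable {R : Type*} [Ring R]

theorem IsVonNeumannRegular.exists_isIdempotentElem_mem (hR : IsVonNeumannRegular R)
    {I : Submodule R R} {e b : R} (heI : e ∈ I) (he : IsIdempotentElem e) (hbI : b ∈ I) :
    ∃ f ∈ I, IsIdempotentElem f ∧ e * f = e ∧ f * e = e ∧ b * f = b := by
  obtain ⟨c, hc⟩ : ∃ c, c = b - b * e := ⟨_, rfl⟩
  obtain ⟨x, hx⟩ := hR c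
  obtain ⟨g, hg⟩ : ∃ g, g = x * c := ⟨_, rfl⟩
  have hce : c * e = 0 := by rw [hc, sub_mul, mul_assoc, he.eq, sub_self]
  have hcg : c * g = c := by rw [hg, ← mul_assoc, hx]
  have hge : g * e = 0 := by rw [hg, mul_assoc, hce, mul_zero]
  have hgg : g * g = g := by nth_rewrite 1 [hg]; rw [mul_assoc, hcg, hg]
  -- The idempotent sought is `f = e + (1 - e) g`.
  have hfix : ∀ y, y * e = 0 → y * g = y → y * (e + g - e * g) = y := fun y h₁ h₂ ↦ by
    rw [mul_sub, mul_add, ← mul_assoc, h₁, h₂, zero_mul, zero_add, sub_zero]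
  have hef : e * (e + g - e * g) = e := by
    rw [mul_sub, mul_add, ← mul_assoc, he.eq, add_sub_cancel_right]
  refine ⟨e + g - e * g, ?_, ?_, hef, ?_, ?_⟩
  · have hgI : g ∈ I := hg ▸ I.smul_mem x (hc ▸ I.sub_mem hbI (I.smul_mem b heI))
    exact I.sub_mem (I.add_mem heI hgI) (I.smul_mem e hgI)
  · rw [IsIdempotentElem, sub_mul, add_mul, mul_assoc, hef, hfix g hge hgg]
  · rw [sub_mul, add_mul, mul_assoc, hge, he.eq, mul_zero, add_zero, sub_zero]
  · calc b * (e + g - e * g) = c * (e + g - e * g) + b * (e * (e + g - e * g)) := by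
          rw [← mul_assoc, ← add_mul, hc, sub_add_cancel]
      _ = b := by rw [hfix c hce hcg, hef, hc, sub_add_cancel]

theorem IsVonNeumannRegular.exists_idempotent_chain (hR : IsVonNeumannRegular R)
    {I : Submodule R R} {a : ℕ → R} (ha : ∀ n, a n ∈ I) :
    ∃ e : ℕ → R, e 0 = 0 ∧ ∀ n, e n ∈ I ∧ IsIdempotentElem (e n) ∧
      e n * e (n + 1) = e n ∧ e (n + 1) * e n = e n ∧ a n * e (n + 1) = a n := by
  have step (n : ℕ) (e : R) : ∃ f : R, e ∈ I → IsIdempotentElem e →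
      f ∈ I ∧ IsIdempotentElem f ∧ e * f = e ∧ f * e = e ∧ a n * f = a n := by
    by_cases h : e ∈ I ∧ IsIdempotentElem e
    · obtain ⟨f, hf⟩ := hR.exists_isIdempotentElem_mem h.1 h.2 (ha n)
      exact ⟨f, fun _ _ ↦ hf⟩
    · exact ⟨0, fun h₁ h₂ ↦ (h ⟨h₁, h₂⟩).elim⟩
  choose next hnext using step
  let e : ℕ → R := fun n ↦ Nat.rec 0 next n
  have he (n : ℕ) : e n ∈ I ∧ IsIdempotentElem (e n) := by
    induction n with
    | zero => exact ⟨I.zero_mem, .zero⟩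
    | succ n ih => exact ⟨(hnext n _ ih.1 ih.2).1, (hnext n _ ih.1 ih.2).2.1⟩
  exact ⟨e, rfl, fun n ↦ ⟨(he n).1, (he n).2, (hnext n _ (he n).1 (he n).2).2.2⟩⟩

theorem Submodule.projective_of_idempotents {ι : Type*} {I : Submodule R R} (d : ι → R)
    (hdI : ∀ i, d i ∈ I) (hd : ∀ i, IsIdempotentElem (d i))
    (hsum : ∀ x ∈ I, ∃ s : Finset ι, (∀ i ∉ s, x * d i = 0) ∧ ∑ i ∈ s, x * d i = x) :
    Module.Projective R I := by
  choose s hs using hsum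
  have hs' (x : R) (hx : x ∈ I) (i : ι) : x * d i ≠ 0 → i ∈ s x hx :=
    not_imp_comm.mp ((hs x hx).1 i)
  let coord : I →ₗ[R] ι →₀ R :=
    { toFun x := Finsupp.onFinset (s x x.2) (fun i ↦ x * d i) (hs' x x.2)
      map_add' x y := by ext; simp [add_mul]
      map_smul' r x := by ext; simp [mul_assoc] }
  refine Module.Projective.of_split coord
    (Finsupp.linearCombination R fun i ↦ (⟨d i, hdI i⟩ : I)) (LinearMap.ext fun x ↦ ?_)
  have hsupp : (coord x).support ⊆ s x x.2 := Finsupp.support_onFinset_subset (hf := hs' x x.2)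
  apply Subtype.ext
  rw [LinearMap.comp_apply, Finsupp.linearCombination_apply,
    Finsupp.sum_of_support_subset _ hsupp _ (by simp)]
  simpa [coord, mul_assoc, (hd _).eq] using (hs x x.2).2

theorem Submodule.projective_of_idempotent_chain {I : Submodule R R} (e : ℕ → R) (he0 : e 0 = 0)
    (heI : ∀ n, e n ∈ I) (he : ∀ n, IsIdempotentElem (e n))
    (hlow : ∀ n, e n * e (n + 1) = e n) (hhigh : ∀ n, e (n + 1) * e n = e n)
    (hfix : ∀ x ∈ I, ∃ N, ∀ n ≥ N, x * e n = x) : Module.Projective R I := by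
  refine projective_of_idempotents (fun n ↦ e (n + 1) - e n) (fun n ↦ I.sub_mem (heI _) (heI n))
    (fun n ↦ (he n).sub (he _) (hlow n) (hhigh n)) fun x hx ↦ ?_
  obtain ⟨N, hN⟩ := hfix x hx
  refine ⟨Finset.range N, fun n hn ↦ ?_, ?_⟩
  · have hn : N ≤ n := not_lt.mp (Finset.mem_range.not.mp hn)
    rw [mul_sub, hN n hn, hN (n + 1) (by omega), sub_self]
  · simp_rw [mul_sub]
    rw [Finset.sum_range_sub (fun n ↦ x * e n), hN N le_rfl, he0, mul_zero, sub_zero]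

theorem IsVonNeumannRegular.projective_span_range (hR : IsVonNeumannRegular R) (a : ℕ → R) :
    Module.Projective R (Submodule.span R (Set.range a)) := by
  obtain ⟨e, he0, he⟩ := hR.exists_idempotent_chain (I := Submodule.span R (Set.range a)) (a := a)
    fun n ↦ Submodule.subset_span ⟨n, rfl⟩
  have hup (x : R) (N : ℕ) (hN : x * e N = x) : ∀ n ≥ N, x * e n = x := by
    refine Nat.le_induction hN fun n _ ih ↦ ?_
    rw [← ih, mul_assoc, (he n).2.2.1]
  refine Submodule.projective_of_idempotent_chain e he0 (fun n ↦ (he n).1) (fun n ↦ (he n).2.1)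
    (fun n ↦ (he n).2.2.1) (fun n ↦ (he n).2.2.2.1) fun x hx ↦ ?_
  induction hx using Submodule.span_induction with
  | mem x hx =>
    obtain ⟨n, rfl⟩ := hx
    exact ⟨n + 1, hup _ _ (he n).2.2.2.2⟩
  | zero => exact ⟨0, fun _ _ ↦ zero_mul _⟩
  | add x y _ _ hx hy =>
    obtain ⟨M, hM⟩ := hx
    obtain ⟨N, hN⟩ := hy
    exact ⟨max M N, fun n hn ↦ by
      rw [add_mul, hM n (le_of_max_le_left hn), hN n (le_of_max_le_right hn)]⟩
  | smul r x _ hx =>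
    obtain ⟨N, hN⟩ := hx
    exact ⟨N, fun n hn ↦ by rw [smul_eq_mul, mul_assoc, hN n hn]⟩

theorem IsVonNeumannRegular.projective_of_countable [Countable R] (hR : IsVonNeumannRegular R)
    (I : Submodule R R) : Module.Projective R I := by
  obtain ⟨a, ha⟩ := exists_surjective_nat I
  have hI : Submodule.span R (Set.range fun n ↦ (a n : R)) = I := by
    rw [Set.range_comp' Subtype.val a, ha.range_eq, Set.image_univ, Subtype.range_coe,
      Submodule.span_eq]
  have := hR.projective_span_range fun n ↦ (a n : R)
  exact .of_equiv (LinearEquiv.ofEq _ _ hI)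

/-- **Countable von Neumann regular rings are hereditary on both sides.**
If `A` is a countable von Neumann regular ring, then every left ideal and every right
ideal of `A` is projective (as a left, resp. right, `A`-module).  Here right `A`-modules
are modules over the opposite ring `Aᵐᵒᵖ`; right ideals are `Aᵐᵒᵖ`-submodules of `A`. -/
theorem stmt7 (A : Type) [Ring A] [Countable A]
    (hvnr : ∀ a : A, ∃ x : A, a * x * a = a) :
    (∀ I : Submodule A A, Module.Projective A I) ∧
    (∀ J : Submodule Aᵐᵒᵖ A, Module.Projective Aᵐᵒᵖ J) := by
  refine ⟨IsVonNeumannRegular.projective_of_countable hvnr, fun J ↦ ?_⟩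
  have : Countable Aᵐᵒᵖ := MulOpposite.unop_injective.countable
  let op : A ≃ₗ[Aᵐᵒᵖ] Aᵐᵒᵖ := MulOpposite.opLinearEquiv Aᵐᵒᵖ
  have := IsVonNeumannRegular.projective_of_countable (IsVonNeumannRegular.op hvnr)
    (J.map op.toLinearMap)
  exact .of_equiv (op.submoduleMap J).symm
end

section
/- Let A be a countable simple von Neumann regular ring which is not right Noetherian, and let Q be an injective cogenerator of Mod-A containing an isomorphic copy of every cyclic right A-module. Then a right A-module M is zero whenever Hom_A(Q, M) = 0 and Ext^1_A(Q, M) = 0. -/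
/-- `Ext¹_R(X, N) ≠ 0`, expressed by the existence of a non-split extension
`0 → N → E → X → 0` of `R`-modules. -/
def Ext1Nonzero (R : Type) [Ring R] (X N : Type) [AddCommGroup X] [Module R X]
    [AddCommGroup N] [Module R N] : Prop :=
  ∃ (E : Type) (_ : AddCommGroup E) (_ : Module R E) (f : N →ₗ[R] E) (g : E →ₗ[R] X),
    Function.Injective f ∧ Function.Surjective g ∧
    LinearMap.range f = LinearMap.ker g ∧
    ¬ ∃ s : X →ₗ[R] E, g.comp s = LinearMap.id

/-!
Over a countable von Neumann regular ring `R` every left ideal is the union of an increasing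
chain `R u₀ ⊆ R u₁ ⊆ ⋯` with idempotent `uₙ`, and such a union is projective. Hence `R` is left
hereditary and quotients of injective modules are injective. Embed `M` into a power `W` of `Q`.
A map from a cyclic module `R ⧸ I` to the injective module `W ⧸ M` extends to `Q ⊇ R ⧸ I` and
then lifts to `W` because `Ext¹(Q, M) = 0`; by Baer's criterion this makes `M` injective. Finally
each `m : M` gives `R ⧸ ann m → M`, which extends to a map `Q → M`, necessarily zero, so `m = 0`.
-/

section Ideals

variable {R : Type*} [Ring R]

theorem IsIdempotentElem.mem_span_singleton_iff {e : R} (he : IsIdempotentElem e) {z : R} :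
    z ∈ R ∙ e ↔ z * e = z := by
  rw [Submodule.mem_span_singleton]
  constructor
  · rintro ⟨a, rfl⟩
    rw [smul_eq_mul, mul_assoc, he.eq]
  · exact fun hz => ⟨z, hz⟩

theorem IsIdempotentElem.span_singleton_le_of_mul_eq {e z : R} (he : IsIdempotentElem e)
    (hz : z * e = z) : R ∙ z ≤ R ∙ e := by
  rw [Submodule.span_singleton_le_iff_mem, he.mem_span_singleton_iff]
  exact hz

theorem Submodule.exists_monotone_fg_iSup_eq_of_countable {M : Type*} [AddCommGroup M]
    [Module R M] [Countable M] (N : Submodule R M) :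
    ∃ J : ℕ → Submodule R M, Monotone J ∧ (∀ n, (J n).FG) ∧ ⨆ n, J n = N := by
  obtain ⟨x, hx⟩ := exists_surjective_nat N
  refine ⟨fun n => span R ((fun i => (x i : M)) '' Set.Iio n), fun m n hmn => ?_, fun n => ?_, ?_⟩
  · exact span_mono (Set.image_mono (Set.Iio_subset_Iio hmn))
  · exact fg_span ((Set.finite_Iio n).image _)
  · refine le_antisymm (iSup_le fun n => ?_) fun z hz => ?_
    · exact span_le.2 (Set.image_subset_iff.2 fun i _ => (x i).2)
    · obtain ⟨i, hi⟩ := hx ⟨z, hz⟩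
      exact mem_iSup_of_mem (i + 1) (subset_span ⟨i, Nat.lt_succ_self i, congrArg Subtype.val hi⟩)

theorem Ideal.exists_linearMap_iSup_apply_eq_smul {M : Type*} [AddCommGroup M] [Module R M]
    {J : ℕ → Ideal R} (hJ : Monotone J) {y : ℕ → M}
    (hy : ∀ n, ∀ z ∈ J n, z • y (n + 1) = z • y n) :
    ∃ t : ↥(⨆ n, J n) →ₗ[R] M, ∀ n (z : ↥(⨆ n, J n)), (z : R) ∈ J n → t z = (z : R) • y n := by
  have hstable : ∀ {n m}, n ≤ m → ∀ z ∈ J n, z • y m = z • y n := by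
    intro n m hnm
    induction m, hnm using Nat.le_induction with
    | base => exact fun _ _ => rfl
    | succ m hnm ih => exact fun z hz => (hy m z (hJ hnm hz)).trans (ih z hz)
  choose N hN using fun z : ↥(⨆ n, J n) => (Submodule.mem_iSup_of_directed J hJ.directed_le).1 z.2
  have hN_eq : ∀ n (z : ↥(⨆ n, J n)), (z : R) ∈ J n → (z : R) • y (N z) = (z : R) • y n :=
    fun n z hz => by
      rw [← hstable (le_max_left (N z) n) _ (hN z), hstable (le_max_right _ _) _ hz]
  refine ⟨⟨⟨fun z => (z : R) • y (N z), fun a b => ?_⟩, fun r a => ?_⟩, hN_eq⟩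
  · have ha := hJ (le_max_left (N a) (N b)) (hN a)
    have hb := hJ (le_max_right (N a) (N b)) (hN b)
    rw [hN_eq _ (a + b) (add_mem ha hb), hN_eq _ a ha, hN_eq _ b hb, Submodule.coe_add, add_smul]
  · exact (hN_eq _ (r • a) (Submodule.smul_mem _ r (hN a))).trans (mul_smul r (a : R) _)

theorem Module.projective_iSup_span_singleton_of_isIdempotentElem {u : ℕ → R}
    (hu : ∀ n, IsIdempotentElem (u n)) (hmono : Monotone fun n => R ∙ u n) :
    Module.Projective R ↥(⨆ n, R ∙ u n) := by
  refine Module.Projective.of_lifting_property fun {M _} _ _ _ _ f g hf => ?_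
  have hu_mem : ∀ n, u n ∈ ⨆ n, R ∙ u n :=
    fun n => Submodule.mem_iSup_of_mem n (Submodule.mem_span_singleton_self _)
  choose v hv using fun n => hf (g ⟨u n, hu_mem n⟩)
  have hv_lift : ∀ n (z : ↥(⨆ n, R ∙ u n)), (z : R) ∈ R ∙ u n → f ((z : R) • v n) = g z := by
    intro n z hz
    rw [map_smul, hv, ← map_smul]
    congr 1
    exact Subtype.ext ((hu n).mem_span_singleton_iff.1 hz)
  -- Correct the lift `v (n + 1)` on `R u (n + 1)` so that it agrees with `y n` on `R u n`.
  let y : ℕ → M := fun n => Nat.rec (v 0) (fun n yn => v (n + 1) + u n • (yn - v (n + 1))) n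
  have hy_succ : ∀ n, y (n + 1) = v (n + 1) + u n • (y n - v (n + 1)) := fun _ => rfl
  have hy : ∀ n, ∀ z ∈ R ∙ u n, z • y (n + 1) = z • y n := by
    intro n z hz
    rw [hy_succ, smul_add, smul_smul, (hu n).mem_span_singleton_iff.1 hz, smul_sub,
      add_sub_cancel]
  have hy_lift : ∀ n (z : ↥(⨆ n, R ∙ u n)), (z : R) ∈ R ∙ u n → f ((z : R) • y n) = g z := by
    intro n
    induction n with
    | zero => exact hv_lift 0
    | succ n ih =>
      intro z hz
      let z' : ↥(⨆ n, R ∙ u n) := (z : R) • ⟨u n, hu_mem n⟩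
      have hz' : (z' : R) ∈ R ∙ u n := Submodule.smul_mem _ _ (Submodule.mem_span_singleton_self _)
      rw [hy_succ, smul_add, smul_smul, smul_sub, map_add, map_sub, hv_lift _ z hz,
        show (z : R) * u n = z' from rfl, ih z' hz', hv_lift _ z' (hmono n.le_succ hz'),
        sub_self, add_zero]
  obtain ⟨t, ht⟩ := Ideal.exists_linearMap_iSup_apply_eq_smul hmono hy
  refine ⟨t, LinearMap.ext fun z => ?_⟩
  obtain ⟨n, hn⟩ := (Submodule.mem_iSup_of_directed _ hmono.directed_le).1 z.2
  rw [LinearMap.comp_apply, ht n z hn, hy_lift n z hn]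

theorem exists_isIdempotentElem_span_singleton_eq (hR : ∀ a : R, ∃ x, a * x * a = a) (p : R) :
    ∃ e, IsIdempotentElem e ∧ R ∙ p = R ∙ e := by
  obtain ⟨x, hx⟩ := hR p
  have he : IsIdempotentElem (x * p) := by
    rw [IsIdempotentElem, mul_assoc, ← mul_assoc p, hx]
  refine ⟨x * p, he, le_antisymm ?_ ?_⟩
  · exact he.span_singleton_le_of_mul_eq (by rw [← mul_assoc, hx])
  · exact (Submodule.span_singleton_le_iff_mem _ _).2
      (Submodule.smul_mem _ x (Submodule.mem_span_singleton_self p))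

theorem exists_isIdempotentElem_sup_span_singleton_eq (hR : ∀ a : R, ∃ x, a * x * a = a)
    {e f : R} (he : IsIdempotentElem e) :
    ∃ w, IsIdempotentElem w ∧ (R ∙ e) ⊔ (R ∙ f) = R ∙ w := by
  obtain ⟨y, hy⟩ := hR (f - f * e)
  -- `e' = y (f - f e)` is an idempotent with `e' e = 0` and `R e + R f = R e + R e'`;
  -- the latter is generated by the idempotent `w = e + e' - e e'`.
  set e' := y * (f - f * e)
  have he'e : e' * e = 0 := by simp only [e', mul_assoc, sub_mul, he.eq, sub_self, mul_zero]
  have he' : IsIdempotentElem e' := by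
    rw [IsIdempotentElem, mul_assoc, ← mul_assoc (f - f * e), hy]
  set w := e + e' - e * e'
  have hew : e * w = e := by simp only [w, mul_sub, mul_add, he.eq, ← mul_assoc]; abel
  have he'w : e' * w = e' := by
    simp only [w, mul_sub, mul_add, he'e, he'.eq, ← mul_assoc, zero_mul]; abel
  have hfw : f * w = f := by
    have hf : f = (f - f * e) * e' + f * e := by
      simp only [e', ← mul_assoc]; rw [hy]; abel
    rw [hf, add_mul, mul_assoc, he'w, mul_assoc, hew]
  have hw : IsIdempotentElem w := by
    rw [IsIdempotentElem]
    nth_rewrite 1 [show w = e + e' - e * e' from rfl]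
    rw [sub_mul, add_mul, hew, he'w, mul_assoc, he'w]
  refine ⟨w, hw, le_antisymm (sup_le ?_ ?_) ?_⟩
  · exact hw.span_singleton_le_of_mul_eq hew
  · exact hw.span_singleton_le_of_mul_eq hfw
  · rw [Submodule.span_singleton_le_iff_mem, Submodule.mem_sup]
    refine ⟨(1 - (1 - e) * y * f) * e, Submodule.smul_mem _ _ (Submodule.mem_span_singleton_self e),
      (1 - e) * y * f, Submodule.smul_mem _ _ (Submodule.mem_span_singleton_self f), ?_⟩
    simp only [w, e']
    noncomm_ring

theorem Ideal.exists_isIdempotentElem_eq_span_singleton_of_fg (hR : ∀ a : R, ∃ x, a * x * a = a)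
    {J : Ideal R} (hJ : J.FG) :
    ∃ e, IsIdempotentElem e ∧ J = R ∙ e := by
  induction J, hJ using Submodule.fg_induction with
  | singleton p => exact exists_isIdempotentElem_span_singleton_eq hR p
  | sup J₁ J₂ _ _ ih₁ ih₂ =>
    obtain ⟨e, he, rfl⟩ := ih₁
    obtain ⟨f, -, rfl⟩ := ih₂
    exact exists_isIdempotentElem_sup_span_singleton_eq hR he

theorem Ideal.projective_of_vonNeumannRegular_of_countable [Countable R]
    (hR : ∀ a : R, ∃ x, a * x * a = a) (I : Ideal R) : Module.Projective R I := by
  obtain ⟨J, hJ, hJfg, rfl⟩ := I.exists_monotone_fg_iSup_eq_of_countable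
  choose u hu hJu using fun n => Ideal.exists_isIdempotentElem_eq_span_singleton_of_fg hR (hJfg n)
  obtain rfl : J = fun n => R ∙ u n := funext hJu
  exact Module.projective_iSup_span_singleton_of_isIdempotentElem hu hJ

end Ideals

theorem Module.Baer.quotient_of_forall_projective {R W : Type*} [Ring R] [AddCommGroup W]
    [Module R W] (hR : ∀ I : Ideal R, Module.Projective R I) (hW : Module.Baer R W)
    (K : Submodule R W) : Module.Baer R (W ⧸ K) := by
  intro I g
  obtain ⟨t, ht⟩ := Module.projective_lifting_property (h := hR I) K.mkQ g K.mkQ_surjective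
  obtain ⟨T, hT⟩ := hW I t
  exact ⟨K.mkQ ∘ₗ T, fun x hx => by rw [LinearMap.comp_apply, hT x hx, ← LinearMap.comp_apply, ht]⟩

theorem exists_lift_of_not_ext1Nonzero {R X M W V : Type} [Ring R] [AddCommGroup X]
    [Module R X] [AddCommGroup M] [Module R M] [AddCommGroup W] [Module R W] [AddCommGroup V]
    [Module R V] {e : M →ₗ[R] W} {π : W →ₗ[R] V} (he : Function.Injective e)
    (hπ : Function.Surjective π) (hexact : LinearMap.range e = LinearMap.ker π)
    (hext : ¬ Ext1Nonzero R X M) (ρ : X →ₗ[R] V) : ∃ T : X →ₗ[R] W, π ∘ₗ T = ρ := by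
  -- the pullback of `π` along `ρ`, an extension of `X` by `M`
  let E : Submodule R (W × X) := LinearMap.ker (π ∘ₗ LinearMap.fst R W X - ρ ∘ₗ LinearMap.snd R W X)
  have hE : ∀ c : W × X, c ∈ E ↔ π c.1 = ρ c.2 := fun c => by
    simp only [E, LinearMap.mem_ker, LinearMap.sub_apply, LinearMap.comp_apply,
      LinearMap.fst_apply, LinearMap.snd_apply, sub_eq_zero]
  have he_ker : ∀ m, π (e m) = 0 := fun m => by
    rw [← LinearMap.mem_ker, ← hexact]
    exact LinearMap.mem_range_self e m
  let i : M →ₗ[R] E := (LinearMap.inl R W X ∘ₗ e).codRestrict E fun m => (hE _).2 (by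
    simp [he_ker])
  let p : E →ₗ[R] X := LinearMap.snd R W X ∘ₗ E.subtype
  have hi : Function.Injective i := fun a b h => he (congrArg (fun c : E => (c : W × X).1) h)
  have hp : Function.Surjective p := fun x => by
    obtain ⟨w, hw⟩ := hπ (ρ x)
    exact ⟨⟨(w, x), (hE _).2 hw⟩, rfl⟩
  have hip : LinearMap.range i = LinearMap.ker p := by
    ext ⟨⟨w, x⟩, hc⟩
    constructor
    · rintro ⟨m, hm⟩
      exact (congrArg (fun c : E => (c : W × X).2) hm).symm
    · intro hx
      obtain rfl : x = 0 := hx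
      have hw : w ∈ LinearMap.ker π := by rw [LinearMap.mem_ker, (hE _).1 hc, map_zero]
      rw [← hexact] at hw
      obtain ⟨m, rfl⟩ := hw
      exact ⟨m, rfl⟩
  obtain ⟨s, hs⟩ : ∃ s : X →ₗ[R] E, p ∘ₗ s = LinearMap.id := by
    by_contra hns
    exact hext ⟨E, _, _, i, p, hi, hp, hip, hns⟩
  refine ⟨LinearMap.fst R W X ∘ₗ E.subtype ∘ₗ s, LinearMap.ext fun x => ?_⟩
  have hsx := (hE _).1 (s x).2
  rwa [show ((s x : E) : W × X).2 = x from LinearMap.congr_fun hs x] at hsx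

theorem Module.Baer.of_forall_exists_lift {R M W V : Type*} [Ring R] [AddCommGroup M] [Module R M]
    [AddCommGroup W] [Module R W] [AddCommGroup V] [Module R V] {e : M →ₗ[R] W}
    {π : W →ₗ[R] V} (he : Function.Injective e) (hexact : LinearMap.range e = LinearMap.ker π)
    (hW : Module.Baer R W)
    (hlift : ∀ (I : Ideal R) (ρ : (R ⧸ I) →ₗ[R] V), ∃ T : (R ⧸ I) →ₗ[R] W, π ∘ₗ T = ρ) :
    Module.Baer R M := by
  intro I g
  obtain ⟨Λ, hΛ⟩ := hW I (e ∘ₗ g)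
  have hΛI : I ≤ LinearMap.ker (π ∘ₗ Λ) := fun x hx => by
    rw [LinearMap.mem_ker, LinearMap.comp_apply, hΛ x hx, ← LinearMap.mem_ker, ← hexact]
    exact LinearMap.mem_range_self e _
  obtain ⟨T, hT⟩ := hlift I (I.liftQ _ hΛI)
  obtain ⟨m, hm⟩ : Λ 1 - T (Submodule.Quotient.mk 1) ∈ LinearMap.range e := by
    rw [hexact, LinearMap.mem_ker, map_sub, ← LinearMap.comp_apply π T, hT, Submodule.liftQ_apply,
      LinearMap.comp_apply, sub_self]
  refine ⟨LinearMap.toSpanSingleton R M m, fun x hx => he ?_⟩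
  have h1 : x • Λ 1 = e (g ⟨x, hx⟩) := by rw [← map_smul, smul_eq_mul, mul_one, hΛ x hx]; rfl
  have h2 : x • T (Submodule.Quotient.mk 1) = 0 := by
    rw [← map_smul, ← Submodule.Quotient.mk_smul, smul_eq_mul, mul_one,
      (Submodule.Quotient.mk_eq_zero I).2 hx, map_zero]
  rw [LinearMap.toSpanSingleton_apply, map_smul, hm, smul_sub, h1, h2, sub_zero]

theorem Module.Baer.subsingleton_of_hom_eq_zero {R Q M : Type*} [Ring R] [AddCommGroup Q]
    [Module R Q] [AddCommGroup M] [Module R M] (hM : Module.Baer R M)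
    (hcyc : ∀ I : Ideal R, ∃ f : (R ⧸ I) →ₗ[R] Q, Function.Injective f)
    (hhom : ∀ f : Q →ₗ[R] M, f = 0) : Subsingleton M := by
  refine subsingleton_of_forall_eq 0 fun m => ?_
  let I := LinearMap.ker (LinearMap.toSpanSingleton R M m)
  obtain ⟨i, hi⟩ := hcyc I
  obtain ⟨h, hh⟩ := hM.extension_property i hi (I.liftQ _ le_rfl)
  have hm := LinearMap.congr_fun hh (Submodule.Quotient.mk 1)
  rw [hhom h] at hm
  simpa using hm.symm

theorem subsingleton_of_hom_eq_zero_of_not_ext1Nonzero {R : Type} [Ring R] [Countable R]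
    (hR : ∀ a : R, ∃ x, a * x * a = a) {Q : Type} [AddCommGroup Q] [Module R Q]
    [Module.Injective R Q] (hcyc : ∀ I : Ideal R, ∃ f : (R ⧸ I) →ₗ[R] Q, Function.Injective f)
    {M κ : Type} [AddCommGroup M] [Module R M] {e : M →ₗ[R] (κ → Q)} (he : Function.Injective e)
    (hhom : ∀ f : Q →ₗ[R] M, f = 0) (hext : ¬ Ext1Nonzero R Q M) : Subsingleton M := by
  have hW : Module.Baer R (κ → Q) := Module.Baer.of_injective inferInstance
  have hquot := hW.quotient_of_forall_projective
    (Ideal.projective_of_vonNeumannRegular_of_countable hR) (LinearMap.range e)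
  refine (Module.Baer.of_forall_exists_lift he (Submodule.ker_mkQ _).symm hW fun I ρ => ?_
    ).subsingleton_of_hom_eq_zero hcyc hhom
  obtain ⟨i, hi⟩ := hcyc I
  obtain ⟨ρ', hρ'⟩ := hquot.extension_property i hi ρ
  obtain ⟨T, hT⟩ := exists_lift_of_not_ext1Nonzero he (Submodule.mkQ_surjective _)
    (Submodule.ker_mkQ _).symm hext ρ'
  exact ⟨T ∘ₗ i, by rw [← LinearMap.comp_assoc, hT, hρ']⟩

theorem stmt10_general (A : Type) [Ring A] [Countable A]
    (hvnr : ∀ a : A, ∃ x : A, a * x * a = a)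
    (Q : Type) [AddCommGroup Q] [Module Aᵐᵒᵖ Q]
    (hinj : Module.Injective Aᵐᵒᵖ Q)
    (hcog : ∀ (M : Type) [AddCommGroup M] [Module Aᵐᵒᵖ M],
      ∃ (κ : Type) (f : M →ₗ[Aᵐᵒᵖ] (κ → Q)), Function.Injective f)
    (hcyc : ∀ I : Submodule Aᵐᵒᵖ A, ∃ f : (A ⧸ I) →ₗ[Aᵐᵒᵖ] Q, Function.Injective f)
    (M : Type) [AddCommGroup M] [Module Aᵐᵒᵖ M]
    (hhom : ∀ f : Q →ₗ[Aᵐᵒᵖ] M, f = 0)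
    (hext : ¬ Ext1Nonzero Aᵐᵒᵖ Q M) :
    Subsingleton M := by
  have hvnr_op (a : Aᵐᵒᵖ) : ∃ x, a * x * a = a := by
    obtain ⟨x, hx⟩ := hvnr a.unop
    exact ⟨MulOpposite.op x, MulOpposite.unop_injective (by simpa [mul_assoc] using hx)⟩
  have hcyc_op (I : Ideal Aᵐᵒᵖ) : ∃ f : (Aᵐᵒᵖ ⧸ I) →ₗ[Aᵐᵒᵖ] Q, Function.Injective f := by
    let φ : Aᵐᵒᵖ ≃ₗ[Aᵐᵒᵖ] A := (MulOpposite.opLinearEquiv (M := A) Aᵐᵒᵖ).symm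
    obtain ⟨f, hf⟩ := hcyc (Submodule.map (φ : Aᵐᵒᵖ →ₗ[Aᵐᵒᵖ] A) I)
    exact ⟨f ∘ₗ (Submodule.Quotient.equiv I _ φ rfl).toLinearMap,
      hf.comp (LinearEquiv.injective _)⟩
  have : Countable Aᵐᵒᵖ := MulOpposite.unop_injective.countable
  have := hinj
  obtain ⟨κ, e, he⟩ := hcog M
  exact subsingleton_of_hom_eq_zero_of_not_ext1Nonzero hvnr_op hcyc_op he hhom hext

/-- **A big injective cogenerator detects all modules.**
Let `A` be a countable simple von Neumann regular ring which is not right Noetherian, and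
let `Q` be an injective cogenerator of the category of right `A`-modules (= `Aᵐᵒᵖ`-modules)
containing an isomorphic copy of every cyclic right `A`-module.  Then a right `A`-module `M`
is zero whenever `Hom_A(Q, M) = 0` and `Ext¹_A(Q, M) = 0`. -/
theorem stmt10 (A : Type) [Ring A] [Countable A] [IsSimpleRing A]
    (hvnr : ∀ a : A, ∃ x : A, a * x * a = a)
    (hnoe : ¬ IsNoetherian Aᵐᵒᵖ A)
    (Q : Type) [AddCommGroup Q] [Module Aᵐᵒᵖ Q]
    (hinj : Module.Injective Aᵐᵒᵖ Q)
    (hcog : ∀ (M : Type) [AddCommGroup M] [Module Aᵐᵒᵖ M],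
      ∃ (κ : Type) (f : M →ₗ[Aᵐᵒᵖ] (κ → Q)), Function.Injective f)
    (hcyc : ∀ I : Submodule Aᵐᵒᵖ A, ∃ f : (A ⧸ I) →ₗ[Aᵐᵒᵖ] Q, Function.Injective f)
    (M : Type) [AddCommGroup M] [Module Aᵐᵒᵖ M]
    (hhom : ∀ f : Q →ₗ[Aᵐᵒᵖ] M, f = 0)
    (hext : ¬ Ext1Nonzero Aᵐᵒᵖ Q M) :
    Subsingleton M :=
  stmt10_general A hvnr Q hinj hcog hcyc M hhom hext
end
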